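/- arXiv:1902.08543 — 3 statements merged into one kernel-verified Lean document; each statement's English description precedes it below -/
import Mathlib

section
/- With the notation of the previous statement, writing r_Q = 1 − f_Q and r = max_Q r_Q, the gap satisfies 0 ≤ F − F̂ ≤ C·r² for some constant C independent of the individual f_Q (i.e., F̂ = F + O(r²)). -/
open Matrix BigOperators Finset
open scoped Classical

/-- The four single-qubit Pauli matrices `I, X, Y, Z`. -/
noncomputable def pauli1 : Fin 4 → Matrix (Fin 2) (Fin 2) ℂ :=
  ![1, !![0, 1; 1, 0], !![0, -Complex.I; Complex.I, 0], !![1, 0; 0, -1]]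

/-- The `N`-qubit Pauli matrix indexed by a string `s : Fin N → Fin 4`,
given as the tensor (Kronecker) product of the single-qubit Paulis `pauli1 (s k)`. -/
noncomputable def nPauli {N : ℕ} (s : Fin N → Fin 4) :
    Matrix (Fin N → Fin 2) (Fin N → Fin 2) ℂ :=
  fun i j => ∏ k, pauli1 (s k) (i k) (j k)

/-- with `f_Q ∈ [1/2,1]`, `r_Q = 1 − f_Q`, `r ≥ max_Q r_Q`, the gap
between `F = 4^{-N} Σ_Q f_Q` and the geometric-mean estimator
`F̂ = 4^{-N} Σ_P Π_Q f_Q^{w(Q|P)}` satisfies `0 ≤ F − F̂ ≤ C r²` for a constant `C`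
independent of the individual `f_Q` (i.e. `F̂ = F + O(r²)`). -/
theorem estimator_gap_quadratic :
    ∃ C : ℝ, 0 < C ∧ ∀ (N : ℕ) (f : (Fin N → Fin 4) → ℝ)
      (w : (Fin N → Fin 4) → (Fin N → Fin 4) → ℝ) (r : ℝ),
      (∀ Q, f Q ∈ Set.Icc (1 / 2 : ℝ) 1) →
      (∀ Q P, 0 ≤ w Q P) →
      (∀ P, ∑ Q, w Q P = 1) →
      (∀ Q, ∑ P, w Q P = 1) →
      (∀ Q, 1 - f Q ≤ r) →
      0 ≤ ((4 : ℝ) ^ N)⁻¹ * (∑ Q : Fin N → Fin 4, f Q)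
          - ((4 : ℝ) ^ N)⁻¹ * ∑ P : Fin N → Fin 4, ∏ Q : Fin N → Fin 4, f Q ^ w Q P
      ∧ ((4 : ℝ) ^ N)⁻¹ * (∑ Q : Fin N → Fin 4, f Q)
          - ((4 : ℝ) ^ N)⁻¹ * ∑ P : Fin N → Fin 4, ∏ Q : Fin N → Fin 4, f Q ^ w Q P
        ≤ C * r ^ 2 := by
  refine ⟨2, by norm_num, ?_⟩
  intro N f w r hf hw hw1 hw2 hr
  obtain ⟨Q0⟩ : Nonempty (Fin N → Fin 4) := inferInstance
  have hr0 : 0 ≤ r := le_trans (by linarith [(hf Q0).2]) (hr Q0)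
  have hfpos : ∀ Q, (0:ℝ) < f Q := fun Q => lt_of_lt_of_le (by norm_num) (hf Q).1
  have h4 : (0:ℝ) < (4:ℝ) ^ N := by positivity
  -- double sum identity
  have hdsum : ∑ P : Fin N → Fin 4, ∑ Q : Fin N → Fin 4, w Q P * f Q
      = ∑ Q : Fin N → Fin 4, f Q := by
    rw [Finset.sum_comm]
    refine Finset.sum_congr rfl fun Q _ => ?_
    rw [← Finset.sum_mul, hw2 Q, one_mul]
  -- lower bound via AM-GM
  have hle : ∑ P : Fin N → Fin 4, ∏ Q : Fin N → Fin 4, f Q ^ w Q P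
      ≤ ∑ Q : Fin N → Fin 4, f Q := by
    rw [← hdsum]
    refine Finset.sum_le_sum fun P _ => ?_
    exact Real.geom_mean_le_arith_mean_weighted _ (fun Q => w Q P) f
      (fun Q _ => hw Q P) (hw1 P) (fun Q _ => (hfpos Q).le)
  -- key pointwise lower bound on the geometric mean
  have key : ∀ P, ∑ Q : Fin N → Fin 4, w Q P * f Q - 2 * r ^ 2
      ≤ ∏ Q : Fin N → Fin 4, f Q ^ w Q P := by
    intro P
    have hlog : ∀ Q, f Q - 1 - 2 * r ^ 2 ≤ Real.log (f Q) := by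
      intro Q
      have h1 : 1 - (f Q)⁻¹ ≤ Real.log (f Q) :=
        Real.one_sub_inv_le_log_of_pos (hfpos Q)
      have hQ1 := (hf Q).1
      have hQ2 := (hf Q).2
      have h2 : f Q - 1 - 2 * (1 - f Q) ^ 2 ≤ 1 - (f Q)⁻¹ := by
        have hinv : (f Q)⁻¹ * f Q = 1 := inv_mul_cancel₀ (hfpos Q).ne'
        nlinarith [hfpos Q, sq_nonneg (1 - f Q), mul_pos (inv_pos.mpr (hfpos Q)) (hfpos Q)]
      have h3 : (1 - f Q) ^ 2 ≤ r ^ 2 := by nlinarith [hr Q]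
      linarith
    have hprod : ∏ Q : Fin N → Fin 4, f Q ^ w Q P
        = Real.exp (∑ Q : Fin N → Fin 4, w Q P * Real.log (f Q)) := by
      rw [Real.exp_sum]
      refine Finset.prod_congr rfl fun Q _ => ?_
      rw [Real.rpow_def_of_pos (hfpos Q), mul_comm]
    have hS : ∑ Q : Fin N → Fin 4, w Q P * f Q - 1 - 2 * r ^ 2
        ≤ ∑ Q : Fin N → Fin 4, w Q P * Real.log (f Q) := by
      have hsum : ∑ Q : Fin N → Fin 4, w Q P * (f Q - 1 - 2 * r ^ 2)
          ≤ ∑ Q : Fin N → Fin 4, w Q P * Real.log (f Q) :=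
        Finset.sum_le_sum fun Q _ =>
          mul_le_mul_of_nonneg_left (hlog Q) (hw Q P)
      have heq : ∑ Q : Fin N → Fin 4, w Q P * (f Q - 1 - 2 * r ^ 2)
          = ∑ Q : Fin N → Fin 4, w Q P * f Q - 1 - 2 * r ^ 2 := by
        simp only [mul_sub, mul_one]
        rw [Finset.sum_sub_distrib, Finset.sum_sub_distrib, ← Finset.sum_mul, hw1 P]
        ring
      linarith [heq ▸ hsum]
    calc ∑ Q : Fin N → Fin 4, w Q P * f Q - 2 * r ^ 2
        ≤ (∑ Q : Fin N → Fin 4, w Q P * Real.log (f Q)) + 1 := by linarith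
      _ ≤ Real.exp (∑ Q : Fin N → Fin 4, w Q P * Real.log (f Q)) :=
          Real.add_one_le_exp _
      _ = ∏ Q : Fin N → Fin 4, f Q ^ w Q P := hprod.symm
  -- sum the key bound over P
  have hge : ∑ Q : Fin N → Fin 4, f Q - (4:ℝ) ^ N * (2 * r ^ 2)
      ≤ ∑ P : Fin N → Fin 4, ∏ Q : Fin N → Fin 4, f Q ^ w Q P := by
    have hsum : ∑ P : Fin N → Fin 4, (∑ Q : Fin N → Fin 4, w Q P * f Q - 2 * r ^ 2)
        ≤ ∑ P : Fin N → Fin 4, ∏ Q : Fin N → Fin 4, f Q ^ w Q P :=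
      Finset.sum_le_sum fun P _ => key P
    rw [Finset.sum_sub_distrib, hdsum, Finset.sum_const, Finset.card_univ] at hsum
    have hcard : (Fintype.card (Fin N → Fin 4) : ℝ) = (4:ℝ) ^ N := by
      simp [Fintype.card_fun]
    rw [nsmul_eq_mul, hcard] at hsum
    exact hsum
  constructor
  · have : ((4:ℝ) ^ N)⁻¹ * (∑ P : Fin N → Fin 4, ∏ Q : Fin N → Fin 4, f Q ^ w Q P)
        ≤ ((4:ℝ) ^ N)⁻¹ * ∑ Q : Fin N → Fin 4, f Q :=
      mul_le_mul_of_nonneg_left hle (inv_nonneg.mpr h4.le)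
    linarith
  · have h1 : ((4:ℝ) ^ N)⁻¹ * (∑ Q : Fin N → Fin 4, f Q - (4:ℝ) ^ N * (2 * r ^ 2))
        ≤ ((4:ℝ) ^ N)⁻¹ * ∑ P : Fin N → Fin 4, ∏ Q : Fin N → Fin 4, f Q ^ w Q P :=
      mul_le_mul_of_nonneg_left hge (inv_nonneg.mpr h4.le)
    rw [mul_sub, ← mul_assoc, inv_mul_cancel₀ h4.ne', one_mul] at h1
    linarith
end

section
/- Averaging the randomized circuit R_m G E R_{m-1} G E ⋯ R_1 G E R_0 over independent uniformly random Pauli channels R_0,…,R_{m-1} (with R_m fixed), after the relabeling R_i = T_i G T_{i-1}† G† with T_0 = R_0, yields the effective superoperator T_m (G ∘ Ē)^m, where Ē = 4^{-N} Σ_P P†∘E∘P is the Pauli twirl of E. -/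
open Matrix BigOperators Finset
open scoped Classical

/-- The unitary-conjugation superoperator `A ↦ P A P†` as a linear map. -/
noncomputable def conjCh {n : Type*} [Fintype n] [DecidableEq n] (P : Matrix n n ℂ) :
    Matrix n n ℂ →ₗ[ℂ] Matrix n n ℂ :=
  (LinearMap.mulLeft ℂ P).comp (LinearMap.mulRight ℂ Pᴴ)

/-- The randomized circuit `R_m G E R_{m-1} G E ⋯ R_1 G E R_0` as a superoperator. -/
noncomputable def circuit {n : Type*} [Fintype n] [DecidableEq n]
    (G E : Matrix n n ℂ →ₗ[ℂ] Matrix n n ℂ)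
    (R : ℕ → Matrix n n ℂ →ₗ[ℂ] Matrix n n ℂ) : ℕ → Matrix n n ℂ →ₗ[ℂ] Matrix n n ℂ
  | 0 => R 0
  | k + 1 => R (k + 1) ∘ₗ G ∘ₗ E ∘ₗ circuit G E R k

/-- The relabeling `R_0 = T_0`, `R_i = T_i ∘ 𝒢 ∘ T_{i-1}† ∘ 𝒢†` (`i ≥ 1`), where
`T_i` for `i < m` is given and `T_m = t` is fixed; Pauli channels are self-adjoint
and `𝒢† = conjCh Uᴴ` for unitary `U`. -/
noncomputable def Rof {N m : ℕ} (U : Matrix (Fin N → Fin 2) (Fin N → Fin 2) ℂ)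
    (T : Fin m → (Fin N → Fin 4)) (t : Fin N → Fin 4) (i : ℕ) :
    Matrix (Fin N → Fin 2) (Fin N → Fin 2) ℂ →ₗ[ℂ]
      Matrix (Fin N → Fin 2) (Fin N → Fin 2) ℂ :=
  let Te : ℕ → (Fin N → Fin 4) := fun j => if h : j < m then T ⟨j, h⟩ else t
  if i = 0 then conjCh (nPauli (Te 0))
  else conjCh (nPauli (Te i)) ∘ₗ conjCh U ∘ₗ conjCh (nPauli (Te (i - 1))) ∘ₗ conjCh Uᴴ

lemma conjCh_apply {n : Type*} [Fintype n] [DecidableEq n] (P : Matrix n n ℂ) (A : Matrix n n ℂ) :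
    conjCh P A = P * A * Pᴴ := by
  simp [conjCh, mul_assoc]

lemma conjCh_comp {n : Type*} [Fintype n] [DecidableEq n] (P Q : Matrix n n ℂ) :
    conjCh P ∘ₗ conjCh Q = conjCh (P * Q) := by
  ext A
  simp [conjCh_apply, Matrix.conjTranspose_mul, mul_assoc]

lemma conjCh_one {n : Type*} [Fintype n] [DecidableEq n] :
    conjCh (1 : Matrix n n ℂ) = LinearMap.id := by
  ext A
  simp [conjCh_apply]

lemma pauli1_conjTranspose (a : Fin 4) : (pauli1 a)ᴴ = pauli1 a := by
  fin_cases a <;>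
    · ext i j
      fin_cases i <;> fin_cases j <;>
        simp [pauli1, Matrix.conjTranspose_apply]

lemma pauli1_mul_self (a : Fin 4) : pauli1 a * pauli1 a = 1 := by
  fin_cases a <;>
    · ext i j
      fin_cases i <;> fin_cases j <;>
        simp [pauli1, Matrix.mul_apply, Fin.sum_univ_two, Matrix.one_apply,
          Complex.I_mul_I]

lemma nPauli_conjTranspose {N : ℕ} (s : Fin N → Fin 4) : (nPauli s)ᴴ = nPauli s := by
  ext i j
  simp only [Matrix.conjTranspose_apply, nPauli]
  rw [show (star (∏ k, pauli1 (s k) (j k) (i k)) : ℂ)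
      = ∏ k, star (pauli1 (s k) (j k) (i k)) from map_prod (starRingEnd ℂ) _ _]
  refine Finset.prod_congr rfl fun k _ => ?_
  have h := congrArg (fun M => M (i k) (j k)) (pauli1_conjTranspose (s k))
  simpa [Matrix.conjTranspose_apply] using h

lemma nPauli_mul_self {N : ℕ} (s : Fin N → Fin 4) : nPauli s * nPauli s = 1 := by
  ext i j
  rw [Matrix.mul_apply]
  have h1 : ∀ x : Fin N → Fin 2, nPauli s i x * nPauli s x j
      = ∏ k, (pauli1 (s k) (i k) (x k) * pauli1 (s k) (x k) (j k)) := by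
    intro x
    simp [nPauli, Finset.prod_mul_distrib]
  simp_rw [h1]
  rw [← Fintype.piFinset_univ, ← Finset.prod_univ_sum (fun _ => (univ : Finset (Fin 2)))
      (fun k b => pauli1 (s k) (i k) b * pauli1 (s k) b (j k))]
  have h2 : ∀ k : Fin N, (∑ b : Fin 2, pauli1 (s k) (i k) b * pauli1 (s k) b (j k))
      = (1 : Matrix (Fin 2) (Fin 2) ℂ) (i k) (j k) := by
    intro k
    rw [← Matrix.mul_apply, pauli1_mul_self]
  simp_rw [h2]
  by_cases hij : i = j
  · subst hij; simp [Matrix.one_apply]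
  · obtain ⟨k, hk⟩ := Function.ne_iff.mp hij
    rw [Matrix.one_apply_ne hij]
    exact Finset.prod_eq_zero (Finset.mem_univ k) (Matrix.one_apply_ne hk)

lemma circuit_congr {n : Type*} [Fintype n] [DecidableEq n]
    (G E : Matrix n n ℂ →ₗ[ℂ] Matrix n n ℂ)
    (R R' : ℕ → Matrix n n ℂ →ₗ[ℂ] Matrix n n ℂ) (k : ℕ)
    (h : ∀ i ≤ k, R i = R' i) : circuit G E R k = circuit G E R' k := by
  induction k with
  | zero => simpa [circuit] using h 0 le_rfl
  | succ k ih =>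
      simp only [circuit, h (k+1) le_rfl,
        ih (fun i hi => h i (hi.trans (Nat.le_succ k)))]

lemma Rof_restrict {N m : ℕ} (U : Matrix (Fin N → Fin 2) (Fin N → Fin 2) ℂ)
    (T : Fin (m+1) → (Fin N → Fin 4)) (t : Fin N → Fin 4) (i : ℕ) (hi : i ≤ m) :
    Rof U T t i = Rof U (Fin.init T) (T (Fin.last m)) i := by
  have hTe : ∀ j ≤ m,
      (if h : j < m + 1 then T ⟨j, h⟩ else t)
        = (if h : j < m then Fin.init T ⟨j, h⟩ else T (Fin.last m)) := by
    intro j hj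
    rcases lt_or_eq_of_le hj with h | h
    · rw [dif_pos h, dif_pos (h.trans (Nat.lt_succ_self m))]
      rfl
    · subst h
      rw [dif_pos (Nat.lt_succ_self j), dif_neg (lt_irrefl j)]
      rfl
  by_cases h : i = 0
  · subst h
    simp only [Rof, if_pos rfl]
    rw [hTe 0 (Nat.zero_le m)]
  · simp only [Rof, if_neg h]
    rw [hTe i hi, hTe (i-1) (le_trans (Nat.sub_le i 1) hi)]

/-- averaging the randomized circuit `R_m G E R_{m-1} G E ⋯ R_1 G E R_0`
over independent uniformly random Pauli channels (equivalently, over the relabeled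
uniform `T_0,…,T_{m-1}`, with `T_m = t` fixed) yields the effective superoperator
`T_m ∘ (𝒢 ∘ Ē)^m`, where `Ē = 4^{-N} Σ_P P† ∘ E ∘ P` is the Pauli twirl of `E`. -/
theorem randomized_circuit_average {N : ℕ}
    (U : Matrix (Fin N → Fin 2) (Fin N → Fin 2) ℂ) (hU : Uᴴ * U = 1)
    (γ : (Fin N → Fin 4) → (Fin N → Fin 4)) (hγ : Function.Bijective γ)
    (hCl : ∀ s, conjCh U ∘ₗ conjCh (nPauli s) ∘ₗ conjCh Uᴴ = conjCh (nPauli (γ s)))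
    (E : Matrix (Fin N → Fin 2) (Fin N → Fin 2) ℂ →ₗ[ℂ]
          Matrix (Fin N → Fin 2) (Fin N → Fin 2) ℂ)
    (m : ℕ) (t : Fin N → Fin 4) :
    (((4 : ℂ) ^ N)⁻¹) ^ m •
        ∑ T : Fin m → (Fin N → Fin 4), circuit (conjCh U) E (Rof U T t) m
      = conjCh (nPauli t) ∘ₗ
          (((conjCh U ∘ₗ (((4 : ℂ) ^ N)⁻¹ •
              ∑ P : Fin N → Fin 4, conjCh (nPauli P) ∘ₗ E ∘ₗ conjCh (nPauli P))) :
            Module.End ℂ (Matrix (Fin N → Fin 2) (Fin N → Fin 2) ℂ)) ^ m) := by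
  have hUU : U * Uᴴ = 1 := mul_eq_one_comm.mp hU
  have hGinv : conjCh Uᴴ ∘ₗ conjCh U = (LinearMap.id :
      Matrix (Fin N → Fin 2) (Fin N → Fin 2) ℂ →ₗ[ℂ] _) := by
    rw [conjCh_comp, hU, conjCh_one]
  set c : ℂ := ((4 : ℂ) ^ N)⁻¹ with hc
  set Eb : Module.End ℂ (Matrix (Fin N → Fin 2) (Fin N → Fin 2) ℂ) :=
    c • ∑ P : Fin N → Fin 4, conjCh (nPauli P) ∘ₗ E ∘ₗ conjCh (nPauli P) with hEb
  induction m generalizing t with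
  | zero =>
      simp [circuit, Rof, Module.End.one_eq_id]
  | succ m ih =>
      -- reindex the sum via snoc
      have hbij : Function.Bijective
          (fun p : (Fin m → (Fin N → Fin 4)) × (Fin N → Fin 4) =>
            (Fin.snoc p.1 p.2 : Fin (m+1) → (Fin N → Fin 4))) := by
        constructor
        · rintro ⟨T1, s1⟩ ⟨T2, s2⟩ h
          have h1 := congrArg Fin.init h
          have h2 := congrArg (fun f => f (Fin.last m)) h
          simp [Fin.init_snoc, Fin.snoc_last] at h1 h2
          exact Prod.ext h1 h2
        · intro T
          exact ⟨(Fin.init T, T (Fin.last m)), Fin.snoc_init_self T⟩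
      rw [← Fintype.sum_bijective _ hbij _ _ (fun p => rfl)]
      -- compute each term
      have hterm : ∀ (T' : Fin m → (Fin N → Fin 4)) (s : Fin N → Fin 4),
          circuit (conjCh U) E (Rof U (Fin.snoc T' s) t) (m+1)
            = (conjCh (nPauli t) ∘ₗ conjCh U ∘ₗ conjCh (nPauli s) ∘ₗ E) ∘ₗ
                circuit (conjCh U) E (Rof U T' s) m := by
        intro T' s
        have hcirc : circuit (conjCh U) E (Rof U (Fin.snoc T' s) t) m
            = circuit (conjCh U) E (Rof U T' s) m := by
          apply circuit_congr
          intro i hi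
          rw [Rof_restrict U (Fin.snoc T' s) t i hi, Fin.init_snoc, Fin.snoc_last]
        have hlast : Rof U (Fin.snoc T' s) t (m+1)
            = conjCh (nPauli t) ∘ₗ conjCh U ∘ₗ conjCh (nPauli s) ∘ₗ conjCh Uᴴ := by
          simp only [Rof, if_neg (Nat.succ_ne_zero m)]
          rw [dif_neg (lt_irrefl (m+1)), Nat.add_sub_cancel,
            dif_pos (Nat.lt_succ_self m)]
          have : (⟨m, Nat.lt_succ_self m⟩ : Fin (m+1)) = Fin.last m := rfl
          rw [this, Fin.snoc_last]
        show Rof U (Fin.snoc T' s) t (m+1) ∘ₗ conjCh U ∘ₗ E ∘ₗ _ = _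
        rw [hlast, hcirc]
        simp only [LinearMap.comp_assoc]
        rw [show conjCh Uᴴ ∘ₗ conjCh U ∘ₗ E ∘ₗ circuit (conjCh U) E (Rof U T' s) m
            = E ∘ₗ circuit (conjCh U) E (Rof U T' s) m from by
          rw [← LinearMap.comp_assoc, hGinv, LinearMap.id_comp]]
      simp_rw [hterm]
      rw [Fintype.sum_prod_type_right]
      simp only [← Module.End.mul_eq_comp] at ih ⊢
      have ih' : ∀ s : Fin N → Fin 4,
          conjCh (nPauli s) * (conjCh U * Eb) ^ m
            = c ^ m • ∑ T : Fin m → Fin N → Fin 4, circuit (conjCh U) E (Rof U T s) m :=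
        fun s => (ih s).symm
      rw [pow_succ' (conjCh U * Eb) m]
      symm
      have hEb' : Eb = c • ∑ P : Fin N → Fin 4,
          conjCh (nPauli P) * E * conjCh (nPauli P) := by
        rw [hEb]; simp only [← Module.End.mul_eq_comp, mul_assoc]
      calc conjCh (nPauli t) * ((conjCh U * Eb) * (conjCh U * Eb) ^ m)
          = c • ∑ s : Fin N → Fin 4,
              conjCh (nPauli t) * (conjCh U * ((conjCh (nPauli s) * (E *
                (conjCh (nPauli s) * (conjCh U * Eb) ^ m))))) := by
            rw [hEb']
            simp only [Finset.mul_sum, Finset.sum_mul, mul_smul_comm, smul_mul_assoc,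
              Finset.smul_sum, mul_assoc]
        _ = c • ∑ s : Fin N → Fin 4, c ^ m •
              ∑ T' : Fin m → Fin N → Fin 4,
                conjCh (nPauli t) * (conjCh U * ((conjCh (nPauli s) * (E *
                  circuit (conjCh U) E (Rof U T' s) m)))) := by
            simp only [ih', Finset.mul_sum, mul_smul_comm, Finset.smul_sum]
        _ = c ^ (m+1) • ∑ s : Fin N → Fin 4,
              ∑ T' : Fin m → Fin N → Fin 4,
                conjCh (nPauli t) * (conjCh U * (conjCh (nPauli s) * E)) *
                  circuit (conjCh U) E (Rof U T' s) m := by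
            rw [pow_succ, mul_comm (c ^ m) c, mul_smul c (c ^ m)]
            simp only [Finset.smul_sum, mul_assoc]
end

section
/- Let X₁,…,X_K be i.i.d. samples of F_P(E) with P uniform over N-qubit Pauli matrices, where E is a Pauli channel. Then the sample mean X̄ satisfies E[X̄] = F(E) and Var(X̄) ≤ 4(1 − F(E))²/K; in particular the number of samples K needed to estimate F(E) to additive precision ε with fixed confidence is independent of N, and proportional to (1−F(E))²/ε². -/
open Matrix BigOperators Finset
open scoped Classical

noncomputable def eps1 : Fin 4 → Fin 4 → ℝ :=
  fun a b => if a = 0 ∨ b = 0 ∨ a = b then 1 else -1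

lemma pauli1_comm (a b : Fin 4) :
    pauli1 a * pauli1 b = ((eps1 a b : ℝ) : ℂ) • (pauli1 b * pauli1 a) := by
  fin_cases a <;> fin_cases b <;>
    · ext i j
      fin_cases i <;> fin_cases j <;>
        simp [pauli1, eps1, Matrix.mul_apply, Fin.sum_univ_two] <;> ring

noncomputable def pi1 : Fin 4 → Fin 2 → Fin 2 :=
  fun a i => if a = 0 ∨ a = 3 then i else i + 1

lemma pauli1_mul_ne (a b : Fin 4) (i : Fin 2) :
    (pauli1 a * pauli1 b) i (pi1 b (pi1 a i)) ≠ 0 := by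
  fin_cases a <;> fin_cases b <;> fin_cases i <;>
    simp [pauli1, pi1, Matrix.mul_apply, Fin.sum_univ_two, Complex.I_ne_zero]

lemma nPauli_mul {N : ℕ} (Q P : Fin N → Fin 4) (i j : Fin N → Fin 2) :
    (nPauli Q * nPauli P) i j = ∏ k, (pauli1 (Q k) * pauli1 (P k)) (i k) (j k) := by
  simp only [Matrix.mul_apply, nPauli, ← Finset.prod_mul_distrib]
  exact (Fintype.prod_sum fun k b => pauli1 (Q k) (i k) b * pauli1 (P k) b (j k)).symm

lemma nPauli_mul_ne_zero {N : ℕ} (Q P : Fin N → Fin 4) :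
    nPauli Q * nPauli P ≠ 0 := by
  intro h
  have := congrFun (congrFun h (fun _ => 0)) (fun k => pi1 (P k) (pi1 (Q k) 0))
  rw [nPauli_mul] at this
  exact Finset.prod_ne_zero_iff.2 (fun k _ => pauli1_mul_ne (Q k) (P k) 0) this

lemma nPauli_comm_rel {N : ℕ} (Q P : Fin N → Fin 4) :
    nPauli Q * nPauli P
      = ((∏ k, eps1 (Q k) (P k) : ℝ) : ℂ) • (nPauli P * nPauli Q) := by
  ext i j
  rw [nPauli_mul, Matrix.smul_apply, nPauli_mul]
  calc ∏ k, (pauli1 (Q k) * pauli1 (P k)) (i k) (j k)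
      = ∏ k, (((eps1 (Q k) (P k) : ℝ) : ℂ) * (pauli1 (P k) * pauli1 (Q k)) (i k) (j k)) := by
        refine Finset.prod_congr rfl fun k _ => ?_
        rw [pauli1_comm (Q k) (P k)]; simp
    _ = _ := by
        rw [Finset.prod_mul_distrib]
        push_cast
        simp [smul_eq_mul]

lemma commute_iff {N : ℕ} (Q P : Fin N → Fin 4) :
    nPauli Q * nPauli P = nPauli P * nPauli Q ↔ ∏ k, eps1 (Q k) (P k) = 1 := by
  constructor
  · intro h
    have h2 := nPauli_comm_rel Q P
    rw [h] at h2
    have h3 : (((∏ k, eps1 (Q k) (P k) : ℝ) : ℂ) - 1) • (nPauli P * nPauli Q) = 0 := by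
      rw [sub_smul, one_smul, ← h2, sub_self]
    rcases smul_eq_zero.1 h3 with h4 | h4
    · have : ((∏ k, eps1 (Q k) (P k) : ℝ) : ℂ) = 1 := by linear_combination h4
      exact_mod_cast this
    · exact absurd h4 (nPauli_mul_ne_zero P Q)
  · intro h
    rw [nPauli_comm_rel Q P, h]
    simp

lemma eps1_zero (b : Fin 4) : eps1 0 b = 1 := by simp [eps1]

lemma eps1_mul_self (a b : Fin 4) : eps1 a b * eps1 a b = 1 := by
  unfold eps1; split <;> norm_num

lemma eps1_ortho (a a' : Fin 4) :
    ∑ b, eps1 a b * eps1 a' b = if a = a' then (4:ℝ) else 0 := by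
  fin_cases a <;> fin_cases a' <;>
    simp (config := { decide := true }) only [eps1, Fin.sum_univ_four] <;>
    norm_num

lemma chi_mem {N : ℕ} (Q P : Fin N → Fin 4) :
    (∏ k, eps1 (Q k) (P k)) = 1 ∨ (∏ k, eps1 (Q k) (P k)) = -1 := by
  rw [← mul_self_eq_one_iff, ← Finset.prod_mul_distrib]
  exact Finset.prod_eq_one fun k _ => eps1_mul_self _ _

lemma chi_ortho {N : ℕ} (Q Q' : Fin N → Fin 4) :
    ∑ P : Fin N → Fin 4, (∏ k, eps1 (Q k) (P k)) * (∏ k, eps1 (Q' k) (P k))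
      = if Q = Q' then (4:ℝ)^N else 0 := by
  have h1 : ∀ P : Fin N → Fin 4,
      (∏ k, eps1 (Q k) (P k)) * (∏ k, eps1 (Q' k) (P k))
        = ∏ k, (eps1 (Q k) (P k) * eps1 (Q' k) (P k)) := fun P =>
    (Finset.prod_mul_distrib).symm
  rw [Finset.sum_congr rfl fun P _ => h1 P,
    ← Fintype.prod_sum fun k b => eps1 (Q k) b * eps1 (Q' k) b]
  have h2 : ∀ k, (∑ b, eps1 (Q k) b * eps1 (Q' k) b) = if Q k = Q' k then (4:ℝ) else 0 :=
    fun k => eps1_ortho _ _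
  rw [Finset.prod_congr rfl fun k _ => h2 k]
  by_cases h : Q = Q'
  · subst h; simp
  · rw [if_neg h]
    obtain ⟨k, hk⟩ := Function.ne_iff.1 h
    exact Finset.prod_eq_zero (Finset.mem_univ k) (if_neg hk)

lemma chi_zero {N : ℕ} (P : Fin N → Fin 4) :
    (∏ k, eps1 ((fun _ => 0 : Fin N → Fin 4) k) (P k)) = 1 :=
  Finset.prod_eq_one fun k _ => eps1_zero _

noncomputable def chi {N : ℕ} (Q P : Fin N → Fin 4) : ℝ := ∏ k, eps1 (Q k) (P k)

noncomputable def Fp {N : ℕ} (p : (Fin N → Fin 4) → ℝ) (P : Fin N → Fin 4) : ℝ :=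
  ∑ Q, p Q * chi Q P

noncomputable def Gp {N : ℕ} (p : (Fin N → Fin 4) → ℝ) (P : Fin N → Fin 4) : ℝ :=
  Fp p P - p (fun _ => 0)

lemma hF {N : ℕ} (p : (Fin N → Fin 4) → ℝ) (hp1 : ∑ Q, p Q = 1) (P : Fin N → Fin 4) :
    2 * (∑ Q, if nPauli Q * nPauli P = nPauli P * nPauli Q then p Q else 0) - 1
      = Fp p P := by
  have h1 : ∀ Q, (if nPauli Q * nPauli P = nPauli P * nPauli Q then p Q else 0)
      = (p Q + p Q * chi Q P) / 2 := by
    intro Q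
    by_cases h : nPauli Q * nPauli P = nPauli P * nPauli Q
    · rw [if_pos h, chi, (commute_iff Q P).1 h]; ring
    · rw [if_neg h]
      have h2 : chi Q P = -1 := by
        rcases chi_mem Q P with h3 | h3
        · exact absurd ((commute_iff Q P).2 h3) h
        · exact h3
      rw [h2]; ring
  rw [Finset.sum_congr rfl fun Q _ => h1 Q, ← Finset.sum_div, Finset.sum_add_distrib, hp1,
    Fp]
  ring

lemma sum_chi {N : ℕ} (Q : Fin N → Fin 4) :
    ∑ P, chi Q P = if Q = (fun _ => 0) then (4:ℝ)^N else 0 := by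
  have h := chi_ortho Q (fun _ => 0)
  simpa [chi, chi_zero] using h

lemma sum_Fp {N : ℕ} (p : (Fin N → Fin 4) → ℝ) :
    ∑ P, Fp p P = (4:ℝ)^N * p (fun _ => 0) := by
  calc ∑ P, Fp p P = ∑ Q, ∑ P, p Q * chi Q P := Finset.sum_comm
    _ = ∑ Q, p Q * ∑ P, chi Q P := by simp_rw [← Finset.mul_sum]
    _ = ∑ Q, p Q * (if Q = (fun _ => 0) then (4:ℝ)^N else 0) := by simp_rw [sum_chi]
    _ = (4:ℝ)^N * p (fun _ => 0) := by
        simp [Finset.sum_ite_eq', mul_comm]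

lemma sum_Fp_sq {N : ℕ} (p : (Fin N → Fin 4) → ℝ) :
    ∑ P, Fp p P * Fp p P = (4:ℝ)^N * ∑ Q, p Q * p Q := by
  have h1 : ∀ P : Fin N → Fin 4, Fp p P * Fp p P
      = ∑ Q, ∑ Q', (p Q * p Q') * (chi Q P * chi Q' P) := by
    intro P
    rw [Fp, Finset.sum_mul_sum]
    exact Finset.sum_congr rfl fun Q _ => Finset.sum_congr rfl fun Q' _ => by ring
  rw [Finset.sum_congr rfl fun P _ => h1 P]
  rw [Finset.sum_comm]
  have h2 : ∀ Q : Fin N → Fin 4,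
      ∑ P : Fin N → Fin 4, ∑ Q' : Fin N → Fin 4, (p Q * p Q') * (chi Q P * chi Q' P)
        = (p Q * p Q) * (4:ℝ)^N := by
    intro Q
    rw [Finset.sum_comm]
    have h3 : ∀ Q' : Fin N → Fin 4,
        ∑ P : Fin N → Fin 4, (p Q * p Q') * (chi Q P * chi Q' P)
          = (p Q * p Q') * (if Q = Q' then (4:ℝ)^N else 0) := by
      intro Q'
      rw [← Finset.mul_sum, ← chi_ortho Q Q']
      rfl
    rw [Finset.sum_congr rfl fun Q' _ => h3 Q']
    simp [Finset.sum_ite_eq]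
  rw [Finset.sum_congr rfl fun Q _ => h2 Q, ← Finset.sum_mul]
  ring

lemma card_strings {N : ℕ} : Fintype.card (Fin N → Fin 4) = 4^N := by
  simp

lemma sum_Gp {N : ℕ} (p : (Fin N → Fin 4) → ℝ) :
    ∑ P, Gp p P = (4:ℝ)^N * p (fun _ => 0) - (4:ℝ)^N * p (fun _ => 0) := by
  simp only [Gp, Finset.sum_sub_distrib, sum_Fp, Finset.sum_const, Finset.card_univ,
    card_strings, nsmul_eq_mul]
  push_cast
  ring

lemma sum_Gp_zero {N : ℕ} (p : (Fin N → Fin 4) → ℝ) : ∑ P, Gp p P = 0 := by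
  rw [sum_Gp]; ring

lemma sum_Gp_sq {N : ℕ} (p : (Fin N → Fin 4) → ℝ) :
    ∑ P, Gp p P * Gp p P
      = (4:ℝ)^N * (∑ Q, p Q * p Q - p (fun _ => 0) * p (fun _ => 0)) := by
  have h1 : ∀ P, Gp p P * Gp p P
      = Fp p P * Fp p P - 2 * p (fun _ => 0) * Fp p P
          + p (fun _ => 0) * p (fun _ => 0) := by
    intro P; rw [Gp]; ring
  rw [Finset.sum_congr rfl fun P _ => h1 P]
  simp only [Finset.sum_add_distrib, Finset.sum_sub_distrib, sum_Fp_sq,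
    ← Finset.mul_sum, sum_Fp, Finset.sum_const, Finset.card_univ, card_strings,
    nsmul_eq_mul]
  push_cast
  ring

lemma sum_eval {K : ℕ} {α : Type*} [Fintype α] (i : Fin K) (f : α → ℝ) :
    ∑ P : Fin K → α, f (P i)
      = (Fintype.card ({j : Fin K // j ≠ i} → α) : ℝ) * ∑ s, f s := by
  calc ∑ P : Fin K → α, f (P i)
      = ∑ q : α × ({j : Fin K // j ≠ i} → α), f q.1 :=
        Fintype.sum_equiv (Equiv.piSplitAt i fun _ => α) _ _ (fun P => rfl)
    _ = ∑ x : α, ∑ _y : {j : Fin K // j ≠ i} → α, f x :=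
        Fintype.sum_prod_type (f := fun q => f q.1)
    _ = _ := by
        simp only [Finset.sum_const, Finset.card_univ, nsmul_eq_mul]
        rw [← Finset.mul_sum]

lemma sum_eval_pair {K : ℕ} {α : Type*} [Fintype α] {i j : Fin K} (hij : j ≠ i)
    (f g : α → ℝ) :
    ∑ P : Fin K → α, f (P i) * g (P j)
      = (∑ s, f s) * ∑ y : {l : Fin K // l ≠ i} → α, g (y ⟨j, hij⟩) := by
  calc ∑ P : Fin K → α, f (P i) * g (P j)
      = ∑ q : α × ({l : Fin K // l ≠ i} → α), f q.1 * g (q.2 ⟨j, hij⟩) :=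
        Fintype.sum_equiv (Equiv.piSplitAt i fun _ => α) _ _ (fun P => rfl)
    _ = ∑ x : α, ∑ y : {l : Fin K // l ≠ i} → α, f x * g (y ⟨j, hij⟩) :=
        Fintype.sum_prod_type (f := fun q : α × ({l : Fin K // l ≠ i} → α) => f q.1 * g (q.2 ⟨j, hij⟩))
    _ = _ := by
        simp_rw [← Finset.mul_sum]
        rw [← Finset.sum_mul]

lemma card_eval {N K : ℕ} (i : Fin K) :
    Fintype.card ({j : Fin K // j ≠ i} → (Fin N → Fin 4)) = (4^N)^(K-1) := by
  rw [Fintype.card_fun]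
  congr 1
  · simp
  · rw [Fintype.card_subtype_compl, Fintype.card_subtype_eq, Fintype.card_fin]

/-- for `K` i.i.d. samples `F_{P_i}(E)` with `P_i` uniform over the
`N`-qubit Pauli labels and `E` a Pauli channel with distribution `p` (so
`F(E) = p(I)` and `F_P(E) = 2 Σ_{Q:[Q,P]=0} p(Q) − 1`), the sample mean
`X̄ = K⁻¹ Σ_i F_{P_i}(E)` satisfies `E[X̄] = F(E)` and `Var(X̄) ≤ 4(1 − F(E))²/K`;
hence the sample complexity for fixed additive precision is independent of `N`. -/
theorem sample_mean_and_variance {N : ℕ}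
    (p : (Fin N → Fin 4) → ℝ) (hp0 : ∀ Q, 0 ≤ p Q) (hp1 : ∑ Q, p Q = 1)
    (K : ℕ) (hK : 0 < K) :
    (((4 : ℝ) ^ N)⁻¹) ^ K *
        (∑ P : Fin K → (Fin N → Fin 4), (K : ℝ)⁻¹ * ∑ i : Fin K,
          (2 * (∑ Q : Fin N → Fin 4,
              if nPauli Q * nPauli (P i) = nPauli (P i) * nPauli Q then p Q else 0)
            - 1))
      = p (fun _ => 0)
    ∧ (((4 : ℝ) ^ N)⁻¹) ^ K *
        (∑ P : Fin K → (Fin N → Fin 4),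
          ((K : ℝ)⁻¹ * (∑ i : Fin K,
            (2 * (∑ Q : Fin N → Fin 4,
                if nPauli Q * nPauli (P i) = nPauli (P i) * nPauli Q then p Q else 0)
              - 1)) - p (fun _ => 0)) ^ 2)
      ≤ 4 * (1 - p (fun _ => 0)) ^ 2 / K := by
  classical
  have hc : (0:ℝ) < (4:ℝ)^N := by positivity
  have hcne : ((4:ℝ)^N) ≠ 0 := ne_of_gt hc
  have hKne : (K:ℝ) ≠ 0 := Nat.cast_ne_zero.2 hK.ne'
  have hcard : ∀ i : Fin K,
      (Fintype.card ({j : Fin K // j ≠ i} → (Fin N → Fin 4)) : ℝ) = ((4:ℝ)^N)^(K-1) := by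
    intro i; rw [card_eval]; push_cast; ring
  have hpow : ((4:ℝ)^N)^(K-1) * (4:ℝ)^N = ((4:ℝ)^N)^K := by
    rw [← pow_succ, Nat.sub_add_cancel hK]
  have h4 : (((4:ℝ)^N)⁻¹)^K * (((4:ℝ)^N)^K) = 1 := by
    rw [← mul_pow, inv_mul_cancel₀ hcne, one_pow]
  constructor
  · have e1 : ∀ P : Fin K → (Fin N → Fin 4),
        (K:ℝ)⁻¹ * ∑ i : Fin K, (2 * (∑ Q : Fin N → Fin 4,
            if nPauli Q * nPauli (P i) = nPauli (P i) * nPauli Q then p Q else 0) - 1)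
          = (K:ℝ)⁻¹ * ∑ i : Fin K, Fp p (P i) :=
      fun P => by rw [Finset.sum_congr rfl fun i _ => hF p hp1 (P i)]
    rw [Finset.sum_congr rfl fun P _ => e1 P, ← Finset.mul_sum, Finset.sum_comm]
    rw [Finset.sum_congr rfl fun i _ =>
      (sum_eval i (Fp p)).trans (by rw [hcard i, sum_Fp])]
    rw [Finset.sum_const, Finset.card_univ, Fintype.card_fin, nsmul_eq_mul]
    calc (((4:ℝ)^N)⁻¹)^K * ((K:ℝ)⁻¹ *
          ((K:ℝ) * (((4:ℝ)^N)^(K-1) * ((4:ℝ)^N * p (fun _ => 0)))))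
        = ((((4:ℝ)^N)⁻¹)^K * (((4:ℝ)^N)^(K-1) * (4:ℝ)^N)) *
            (((K:ℝ)⁻¹ * (K:ℝ)) * p (fun _ => 0)) := by ring
      _ = p (fun _ => 0) := by
          rw [hpow, h4, inv_mul_cancel₀ hKne, one_mul, one_mul]
  · set D : ℝ := ∑ Q, p Q * p Q - p (fun _ => 0) * p (fun _ => 0) with hD
    have e2 : ∀ P : Fin K → (Fin N → Fin 4),
        ((K:ℝ)⁻¹ * (∑ i : Fin K, (2 * (∑ Q : Fin N → Fin 4,
            if nPauli Q * nPauli (P i) = nPauli (P i) * nPauli Q then p Q else 0) - 1))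
          - p (fun _ => 0)) ^ 2
          = (K:ℝ)⁻¹ * (K:ℝ)⁻¹ *
              ∑ i : Fin K, ∑ j : Fin K, Gp p (P i) * Gp p (P j) := by
      intro P
      rw [Finset.sum_congr rfl fun i _ => hF p hp1 (P i)]
      have e2a : (K:ℝ)⁻¹ * (∑ i : Fin K, Fp p (P i)) - p (fun _ => 0)
          = (K:ℝ)⁻¹ * ∑ i : Fin K, Gp p (P i) := by
        simp only [Gp, Finset.sum_sub_distrib, Finset.sum_const, Finset.card_univ,
          Fintype.card_fin, nsmul_eq_mul]
        field_simp
      rw [e2a]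
      calc ((K:ℝ)⁻¹ * ∑ i : Fin K, Gp p (P i)) ^ 2
          = (K:ℝ)⁻¹ * (K:ℝ)⁻¹ *
              ((∑ i : Fin K, Gp p (P i)) * ∑ j : Fin K, Gp p (P j)) := by ring
        _ = _ := by rw [Finset.sum_mul_sum]
    rw [Finset.sum_congr rfl fun P _ => e2 P, ← Finset.mul_sum]
    have key : ∀ i j : Fin K,
        (∑ P : Fin K → (Fin N → Fin 4), Gp p (P i) * Gp p (P j))
          = if i = j then ((4:ℝ)^N)^(K-1) * ((4:ℝ)^N * D) else 0 := by
      intro i j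
      by_cases h : i = j
      · subst h
        rw [if_pos rfl, hD, ← sum_Gp_sq p, ← hcard i]
        exact sum_eval i (fun s => Gp p s * Gp p s)
      · rw [if_neg h, sum_eval_pair (Ne.symm h) (Gp p) (Gp p), sum_Gp_zero, zero_mul]
    have swap : (∑ P : Fin K → (Fin N → Fin 4), ∑ i : Fin K, ∑ j : Fin K,
          Gp p (P i) * Gp p (P j))
        = ∑ i : Fin K, ∑ j : Fin K, ∑ P : Fin K → (Fin N → Fin 4),
            Gp p (P i) * Gp p (P j) := by
      rw [Finset.sum_comm]
      exact Finset.sum_congr rfl fun i _ => Finset.sum_comm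
    rw [swap, Finset.sum_congr rfl fun i _ => Finset.sum_congr rfl fun j _ => key i j]
    simp only [Finset.sum_ite_eq, Finset.mem_univ, if_true]
    rw [Finset.sum_const, Finset.card_univ, Fintype.card_fin, nsmul_eq_mul]
    have hL : (((4:ℝ)^N)⁻¹)^K * ((K:ℝ)⁻¹ * (K:ℝ)⁻¹ *
          ((K:ℝ) * (((4:ℝ)^N)^(K-1) * ((4:ℝ)^N * D))))
        = (K:ℝ)⁻¹ * D := by
      calc (((4:ℝ)^N)⁻¹)^K * ((K:ℝ)⁻¹ * (K:ℝ)⁻¹ *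
            ((K:ℝ) * (((4:ℝ)^N)^(K-1) * ((4:ℝ)^N * D))))
          = ((((4:ℝ)^N)⁻¹)^K * (((4:ℝ)^N)^(K-1) * (4:ℝ)^N)) *
              (((K:ℝ)⁻¹ * (K:ℝ)) * ((K:ℝ)⁻¹ * D)) := by ring
        _ = (K:ℝ)⁻¹ * D := by
            rw [hpow, h4, inv_mul_cancel₀ hKne, one_mul, one_mul]
    rw [hL]
    have hDle : D ≤ 4 * (1 - p (fun _ => 0)) ^ 2 := by
      have he : p (fun _ => 0) * p (fun _ => 0)
            + ∑ Q ∈ Finset.univ.erase (fun _ => 0), p Q * p Q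
          = ∑ Q, p Q * p Q :=
        Finset.add_sum_erase Finset.univ (fun Q => p Q * p Q)
          (Finset.mem_univ (fun _ => 0))
      have he1 : p (fun _ => 0) + ∑ Q ∈ Finset.univ.erase (fun _ => 0), p Q = 1 := by
        rw [Finset.add_sum_erase Finset.univ p (Finset.mem_univ (fun _ => 0))]
        exact hp1
      have hle : ∑ Q ∈ Finset.univ.erase (fun _ => 0), p Q ^ 2
          ≤ (∑ Q ∈ Finset.univ.erase (fun _ => 0), p Q) ^ 2 :=
        Finset.sum_sq_le_sq_sum_of_nonneg fun Q _ => hp0 Q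
      have hDe : D = ∑ Q ∈ Finset.univ.erase (fun _ => 0), p Q ^ 2 := by
        rw [hD, ← he]
        simp [sq]
      have hse : ∑ Q ∈ Finset.univ.erase (fun _ => 0), p Q = 1 - p (fun _ => 0) := by
        linarith
      rw [hDe, hse] at *
      nlinarith [sq_nonneg (1 - p (fun _ => 0))]
    calc (K:ℝ)⁻¹ * D ≤ (K:ℝ)⁻¹ * (4 * (1 - p (fun _ => 0)) ^ 2) :=
          mul_le_mul_of_nonneg_left hDle (inv_nonneg.2 (Nat.cast_nonneg K))
      _ = 4 * (1 - p (fun _ => 0)) ^ 2 / K := by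
          rw [div_eq_mul_inv]; ring
end
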